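/- Let V be a real vector space of finite dimension m and let φ ∈ ∧•V* be a nonzero element. Then the null space L_φ = {v ∈ V ⊕ V* : v·φ = 0} is an isotropic subspace of V ⊕ V* with respect to the canonical symmetric bilinear form. -/

import Mathlib

set_option synthInstance.maxHeartbeats 1000000
set_option maxHeartbeats 1000000

open Module

noncomputable def canForm (V : Type*) [AddCommGroup V] [Module ℝ V] :
    LinearMap.BilinForm ℝ (V × Module.Dual ℝ V) :=
  LinearMap.mk₂ ℝ (fun p q => (p.2 q.1 + q.2 p.1) / 2)
    (fun p p' q => by simp; ring)
    (fun c p q => by simp; ring)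
    (fun p q q' => by simp; ring)
    (fun c p q => by simp; ring)

/-- The quadratic form `Q(X+ξ) = ξ(X)` associated to the canonical bilinear form. -/
noncomputable def Qform (V : Type*) [AddCommGroup V] [Module ℝ V] :
    QuadraticForm ℝ (V × Module.Dual ℝ V) :=
  (canForm V).toQuadraticMap

set_option synthInstance.maxHeartbeats 1000000 in
/-- The action `(X+ξ)·φ = i_X φ + ξ ∧ φ` of `V ⊕ V*` on `∧•V*`. -/
noncomputable def cliffAct {V : Type*} [AddCommGroup V] [Module ℝ V]
    (v : V × Module.Dual ℝ V) :
    ExteriorAlgebra ℝ (Module.Dual ℝ V) →ₗ[ℝ] ExteriorAlgebra ℝ (Module.Dual ℝ V) :=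
  CliffordAlgebra.contractLeft (Q := (0 : QuadraticForm ℝ (Module.Dual ℝ V)))
      (Module.Dual.eval ℝ V v.1) +
    LinearMap.mulLeft ℝ (ExteriorAlgebra.ι ℝ v.2)

/-- Contractions anticommute, wedge products anticommute, and `i_X (ξ ∧ φ) + ξ ∧ i_X φ = ξ(X) φ`. -/
theorem cliffAct_anticomm {V : Type*} [AddCommGroup V] [Module ℝ V]
    (u w : V × Module.Dual ℝ V) (φ : ExteriorAlgebra ℝ (Module.Dual ℝ V)) :
    cliffAct u (cliffAct w φ) + cliffAct w (cliffAct u φ) = (2 * canForm V u w) • φ := by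
  have wedge_anticomm : ExteriorAlgebra.ι ℝ u.2 * (ExteriorAlgebra.ι ℝ w.2 * φ)
      + ExteriorAlgebra.ι ℝ w.2 * (ExteriorAlgebra.ι ℝ u.2 * φ) = 0 := by
    rw [← mul_assoc, ← mul_assoc, ← add_mul, ExteriorAlgebra.ι_add_mul_swap, zero_mul]
  have form : 2 * canForm V u w = u.2 w.1 + w.2 u.1 := by
    simp only [canForm, LinearMap.mk₂_apply]
    ring
  simp only [cliffAct, LinearMap.add_apply, LinearMap.mulLeft_apply, map_add]
  rw [CliffordAlgebra.contractLeft_ι_mul, CliffordAlgebra.contractLeft_ι_mul,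
    CliffordAlgebra.contractLeft_comm, form, add_smul, eq_neg_of_add_eq_zero_left wedge_anticomm]
  simp only [Module.Dual.eval_apply]
  abel

theorem nullSpace_isotropic
    (V : Type*) [AddCommGroup V] [Module ℝ V]
    (φ : ExteriorAlgebra ℝ (Module.Dual ℝ V)) (hφ : φ ≠ 0) :
    ∀ u ∈ {v : V × Module.Dual ℝ V | cliffAct v φ = 0},
      ∀ w ∈ {v : V × Module.Dual ℝ V | cliffAct v φ = 0},
        canForm V u w = 0 := by
  intro u (hu : cliffAct u φ = 0) w (hw : cliffAct w φ = 0)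
  have h := cliffAct_anticomm u w φ
  rw [hu, hw, map_zero, map_zero, add_zero, eq_comm, smul_eq_zero] at h
  exact (mul_eq_zero.mp (h.resolve_right hφ)).resolve_left two_ne_zero
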